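/- Let R be a reduced crystallographic root system in a finite-dimensional real inner product space E, let S be a base of R, and let H lie in the open fundamental Weyl chamber K(S), with S(H) = {α ∈ R : ⟨α, H⟩ = 2} nonempty. Let R(H) be the root subsystem of R with base S(H) (the images of S(H) under the group generated by the reflections in elements of S(H)), and let R(H)₊ be its positive roots with respect to S(H). Write H = H_∥ + H_⊥ where H_∥ is the orthogonal projection of H onto the span of S(H). Then H_∥ = Σ_{α ∈ R(H)₊} α*, where α* = 2α/⟨α,α⟩ is the inverse root of α; in particular H_∥ lies in the ℤ-span of the inverse roots of R. -/

import Mathlib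

/-!
Every root of the subsystem generated by `S(H)` lies in `R ∩ span_ℤ S(H)`, so its level `⟪β, H⟫`
lies in `2ℤ \ {0}`. With this grading, inductions on the level show that the roots of
positive level are nonnegative combinations of `S(H)`, and that each reflection `s_γ`, `γ ∈ S(H)`,
permutes the positive roots other than `γ`. Hence `s_γ` fixes `∑_{β ≠ γ} β*`, which is therefore
orthogonal to `γ`, and `⟪∑_{β ∈ R(H)₊} β*, γ⟫ = ⟪γ*, γ⟫ = 2 = ⟪H_∥, γ⟫`. Both vectors lie in the
span of `S(H)`, so they coincide.
-/

open scoped RealInnerProductSpace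

/-- A reduced crystallographic root system in a real inner product space `E`:
a finite set of nonzero vectors, with integral Cartan numbers, closed under the
reflections it defines, and such that the only multiples of a root `α` that are
roots are `±α`. -/
def IsRootSystem {E : Type*} [NormedAddCommGroup E] [InnerProductSpace ℝ E]
    (R : Set E) : Prop :=
  R.Finite ∧ (0 : E) ∉ R ∧
  (∀ α ∈ R, ∀ β ∈ R, ∃ n : ℤ, 2 * ⟪β, α⟫ / ⟪α, α⟫ = (n : ℝ)) ∧
  (∀ α ∈ R, ∀ β ∈ R, β - (2 * ⟪β, α⟫ / ⟪α, α⟫) • α ∈ R) ∧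
  (∀ α ∈ R, ∀ t : ℝ, t • α ∈ R → t = 1 ∨ t = -1)

/-- `S` is a base (simple system) of the root system `R`: a linearly independent
subset such that every root is an integer linear combination of elements of `S`
with coefficients all nonnegative or all nonpositive. -/
def IsBase {E : Type*} [NormedAddCommGroup E] [InnerProductSpace ℝ E]
    (R S : Set E) : Prop :=
  S ⊆ R ∧ LinearIndependent ℝ ((↑) : S → E) ∧
  ∀ β ∈ R, ∃ c : E →₀ ℤ, ↑c.support ⊆ S ∧
    β = c.sum (fun α n => (n : ℝ) • α) ∧
    ((∀ α, 0 ≤ c α) ∨ (∀ α, c α ≤ 0))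

/-- The reflection `s_β : x ↦ x - (2⟪x,β⟫/⟪β,β⟫) β` in the hyperplane orthogonal
to `β`, as an element of the monoid `Function.End E` of self-maps of `E`. -/
noncomputable def sRefl {E : Type*} [NormedAddCommGroup E] [InnerProductSpace ℝ E]
    (β : E) : Function.End E :=
  fun x => x - (2 * ⟪x, β⟫ / ⟪β, β⟫) • β

/-- The set of all images of elements of `Sg` under the group generated by the
reflections `s_β`, `β ∈ Sg` (since each reflection is an involution, this group
coincides with the generated monoid of self-maps). -/
noncomputable def subSystem {E : Type*} [NormedAddCommGroup E] [InnerProductSpace ℝ E]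
    (Sg : Set E) : Set E :=
  {x | ∃ w ∈ Submonoid.closure (sRefl '' Sg), ∃ α ∈ Sg, x = w α}

/-- `β` is an integer linear combination of elements of `S'` with all
coefficients nonnegative. -/
def IsNonnegCombo {E : Type*} [NormedAddCommGroup E] [InnerProductSpace ℝ E]
    (S' : Set E) (β : E) : Prop :=
  ∃ c : E →₀ ℤ, ↑c.support ⊆ S' ∧ β = c.sum (fun α n => (n : ℝ) • α) ∧ ∀ α, 0 ≤ c α

/-- The inverse root `α* = 2α/⟪α,α⟫`. -/
noncomputable def invRoot {E : Type*} [NormedAddCommGroup E] [InnerProductSpace ℝ E]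
    (α : E) : E :=
  (2 / ⟪α, α⟫) • α


section Reflection

variable {E : Type*} [NormedAddCommGroup E] [InnerProductSpace ℝ E] {γ : E}

lemma sRefl_eq_preReflection (γ : E) :
    sRefl γ = ⇑(Module.preReflection γ ((2 / ⟪γ, γ⟫) • innerₛₗ ℝ γ)) := by
  funext x
  simp only [sRefl, Module.preReflection_apply, LinearMap.smul_apply, innerₛₗ_apply_apply,
    smul_eq_mul, real_inner_comm γ x]
  ring_nf

lemma sRefl_sub (γ x y : E) : sRefl γ (x - y) = sRefl γ x - sRefl γ y := by
  rw [sRefl_eq_preReflection, map_sub]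

lemma sRefl_sum {ι : Type*} (γ : E) (s : Finset ι) (f : ι → E) :
    sRefl γ (∑ i ∈ s, f i) = ∑ i ∈ s, sRefl γ (f i) := by
  rw [sRefl_eq_preReflection, map_sum]

lemma coroot_apply_self (hγ : ⟪γ, γ⟫ ≠ 0) : ((2 / ⟪γ, γ⟫) • innerₛₗ ℝ γ) γ = 2 := by
  rw [LinearMap.smul_apply, innerₛₗ_apply_apply, smul_eq_mul, div_mul_cancel₀ _ hγ]

lemma sRefl_self (hγ : ⟪γ, γ⟫ ≠ 0) : sRefl γ γ = -γ := by
  rw [sRefl_eq_preReflection, Module.preReflection_apply_self (coroot_apply_self hγ)]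

lemma sRefl_involutive (hγ : ⟪γ, γ⟫ ≠ 0) : Function.Involutive (sRefl γ) := by
  rw [sRefl_eq_preReflection]
  exact Module.involutive_preReflection (coroot_apply_self hγ)

lemma inner_sRefl_sRefl (hγ : ⟪γ, γ⟫ ≠ 0) (x y : E) :
    ⟪sRefl γ x, sRefl γ y⟫ = ⟪x, y⟫ := by
  simp only [sRefl, inner_sub_left, inner_sub_right, real_inner_smul_left,
    real_inner_smul_right, real_inner_comm γ x, real_inner_comm γ y]
  field_simp
  ring

lemma invRoot_sRefl (hγ : ⟪γ, γ⟫ ≠ 0) (x : E) :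
    invRoot (sRefl γ x) = sRefl γ (invRoot x) := by
  rw [invRoot, invRoot, inner_sRefl_sRefl hγ, sRefl_eq_preReflection, map_smul]

lemma inner_eq_zero_of_sRefl_eq (hγ : ⟪γ, γ⟫ ≠ 0) {x : E} (hx : sRefl γ x = x) :
    ⟪x, γ⟫ = 0 := by
  have hγ0 : γ ≠ 0 := fun h => hγ (by simp [h])
  have : (2 * ⟪x, γ⟫ / ⟪γ, γ⟫) • γ = 0 := sub_eq_self.1 hx
  simpa [hγ, hγ0] using this

lemma inner_sum_invRoot_eq_two [DecidableEq E] {P : Finset E} (hγP : γ ∈ P) (hγ : ⟪γ, γ⟫ ≠ 0)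
    (hmaps : Set.MapsTo (sRefl γ) ↑(P.erase γ) ↑(P.erase γ)) :
    ⟪∑ β ∈ P, invRoot β, γ⟫ = 2 := by
  have hfix : sRefl γ (∑ β ∈ P.erase γ, invRoot β) = ∑ β ∈ P.erase γ, invRoot β := by
    rw [sRefl_sum]
    exact Finset.sum_nbij' (sRefl γ) (sRefl γ) hmaps hmaps (fun β _ => sRefl_involutive hγ β)
      (fun β _ => sRefl_involutive hγ β) fun β _ => (invRoot_sRefl hγ β).symm
  rw [← Finset.add_sum_erase P invRoot hγP, inner_add_left, inner_eq_zero_of_sRefl_eq hγ hfix,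
    invRoot, real_inner_smul_left, div_mul_cancel₀ _ hγ, add_zero]

end Reflection

section Obtuse

variable {E : Type*} [NormedAddCommGroup E] [InnerProductSpace ℝ E]

/-- Write `β = x - y` with `x, y` the nonnegative combinations given by the positive and negative
parts of the coefficients. Then `⟪x, x⟫ = ⟪x, β⟫ + ⟪x, y⟫ ≤ 0`, so `x = 0` and `β = -y` lies on the
nonpositive side of `H`. -/
lemma exists_inner_pos_of_mem_span {s : Finset E} {H β : E}
    (hobt : ∀ u ∈ s, ∀ v ∈ s, u ≠ v → ⟪u, v⟫ ≤ 0) (hH : ∀ v ∈ s, 0 ≤ ⟪v, H⟫)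
    (hβ : β ∈ Submodule.span ℝ (s : Set E)) (hβH : 0 < ⟪β, H⟫) : ∃ v ∈ s, 0 < ⟪β, v⟫ := by
  by_contra! hβs
  obtain ⟨c, -, rfl⟩ := Submodule.mem_span_finset.1 hβ
  set x := ∑ v ∈ s, (c v)⁺ • v
  set y := ∑ v ∈ s, (c v)⁻ • v
  have hβxy : ∑ v ∈ s, c v • v = x - y := by
    simp only [x, y, ← Finset.sum_sub_distrib, ← sub_smul, posPart_sub_negPart]
  have hxβ : ⟪x, ∑ v ∈ s, c v • v⟫ ≤ 0 := by
    rw [sum_inner]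
    refine Finset.sum_nonpos fun v hv => ?_
    rw [real_inner_smul_left, real_inner_comm]
    exact mul_nonpos_of_nonneg_of_nonpos (posPart_nonneg _) (hβs v hv)
  have hxy : ⟪x, y⟫ ≤ 0 := by
    simp only [x, y, sum_inner, inner_sum, real_inner_smul_left, real_inner_smul_right]
    refine Finset.sum_nonpos fun u hu => Finset.sum_nonpos fun v hv => ?_
    rcases eq_or_ne u v with rfl | huv
    · rcases le_total (c u) 0 with h | h <;> simp [h]
    · exact mul_nonpos_of_nonneg_of_nonpos (negPart_nonneg _)
        (mul_nonpos_of_nonneg_of_nonpos (posPart_nonneg _) (hobt v hv u hu huv.symm))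
  have hx : x = 0 := by
    refine inner_self_eq_zero.1 (le_antisymm ?_ real_inner_self_nonneg)
    calc ⟪x, x⟫ = ⟪x, ∑ v ∈ s, c v • v⟫ + ⟪x, y⟫ := by rw [hβxy, inner_sub_right]; ring
      _ ≤ 0 := add_nonpos hxβ hxy
  have hyH : 0 ≤ ⟪y, H⟫ := by
    rw [sum_inner]
    exact Finset.sum_nonneg fun v hv => by
      rw [real_inner_smul_left]; exact mul_nonneg (negPart_nonneg _) (hH v hv)
  rw [hβxy, hx, zero_sub, inner_neg_left] at hβH
  linarith

lemma eq_of_mem_span_of_forall_inner_eq {s : Set E} {x y : E} (hx : x ∈ Submodule.span ℝ s)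
    (hy : y ∈ Submodule.span ℝ s) (h : ∀ v ∈ s, ⟪x, v⟫ = ⟪y, v⟫) : x = y := by
  have hle : Submodule.span ℝ s ≤ (ℝ ∙ (x - y))ᗮ := Submodule.span_le.2 fun v hv => by
    rw [SetLike.mem_coe, Submodule.mem_orthogonal_singleton_iff_inner_right, inner_sub_left,
      h v hv, sub_self]
  have := Submodule.mem_orthogonal_singleton_iff_inner_right.1 (hle (Submodule.sub_mem _ hx hy))
  exact sub_eq_zero.1 (inner_self_eq_zero.1 this)

end Obtuse

section NonnegCombo

variable {E : Type*} [NormedAddCommGroup E] [InnerProductSpace ℝ E] {S' : Set E} {x y H : E}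

lemma IsNonnegCombo.of_mem (hx : x ∈ S') : IsNonnegCombo S' x := by
  classical
  refine ⟨Finsupp.single x 1, ?_, by simp, fun α => ?_⟩
  · exact (Finset.coe_subset.2 Finsupp.support_single_subset).trans (by simpa using hx)
  · rw [Finsupp.single_apply]; split_ifs <;> simp

lemma IsNonnegCombo.add (hx : IsNonnegCombo S' x) (hy : IsNonnegCombo S' y) :
    IsNonnegCombo S' (x + y) := by
  classical
  obtain ⟨c, hc, rfl, hc0⟩ := hx
  obtain ⟨d, hd, rfl, hd0⟩ := hy
  refine ⟨c + d, ?_, ?_, fun α => add_nonneg (hc0 α) (hd0 α)⟩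
  · exact (Finset.coe_subset.2 Finsupp.support_add).trans (by simpa using Set.union_subset hc hd)
  · rw [Finsupp.sum_add_index' (fun _ => by simp) fun _ _ _ => by push_cast; exact add_smul _ _ _]

lemma IsNonnegCombo.inner_pos (hS' : ∀ α ∈ S', 0 < ⟪α, H⟫) (hx : IsNonnegCombo S' x)
    (hx0 : x ≠ 0) : 0 < ⟪x, H⟫ := by
  obtain ⟨c, hc, rfl, hc0⟩ := hx
  have hne : c.support.Nonempty := Finsupp.support_nonempty_iff.2 (by rintro rfl; simp at hx0)
  rw [Finsupp.sum, sum_inner]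
  refine Finset.sum_pos (fun α hα => ?_) hne
  rw [real_inner_smul_left]
  have hcα : (0 : ℝ) < c α := by
    exact_mod_cast (hc0 α).lt_of_ne (Ne.symm (Finsupp.mem_support_iff.1 hα))
  exact mul_pos hcα (hS' α (hc hα))

end NonnegCombo

section RootSystem

variable {E : Type*} [NormedAddCommGroup E] [InnerProductSpace ℝ E] {R : Set E} {α β : E}

lemma IsRootSystem.ne_zero (hR : IsRootSystem R) (hα : α ∈ R) : α ≠ 0 :=
  fun h => hR.2.1 (h ▸ hα)

lemma IsRootSystem.inner_self_pos (hR : IsRootSystem R) (hα : α ∈ R) : 0 < ⟪α, α⟫ :=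
  real_inner_self_pos.2 (hR.ne_zero hα)

lemma IsRootSystem.exists_int_cartan (hR : IsRootSystem R) (hα : α ∈ R) (hβ : β ∈ R) :
    ∃ n : ℤ, 2 * ⟪β, α⟫ / ⟪α, α⟫ = n :=
  hR.2.2.1 α hα β hβ

lemma IsRootSystem.sRefl_mem (hR : IsRootSystem R) (hα : α ∈ R) (hβ : β ∈ R) :
    sRefl α β ∈ R :=
  hR.2.2.2.1 α hα β hβ

lemma IsRootSystem.neg_mem (hR : IsRootSystem R) (hα : α ∈ R) : -α ∈ R := by
  simpa [sRefl_self (hR.inner_self_pos hα).ne'] using hR.sRefl_mem hα hα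

lemma IsRootSystem.two_smul_notMem (hR : IsRootSystem R) (hα : α ∈ R) : (2 : ℝ) • α ∉ R :=
  fun h => by rcases hR.2.2.2.2 α hα 2 h with h | h <;> norm_num at h

/-- Unless `β` is a positive multiple of `α`, strict Cauchy–Schwarz makes the product of the two
(positive, integral) Cartan numbers less than `4`, so one of them is `1`. -/
lemma IsRootSystem.sub_mem_of_inner_pos (hR : IsRootSystem R) (hα : α ∈ R) (hβ : β ∈ R)
    (hne : β ≠ α) (hpos : 0 < ⟪β, α⟫) : β - α ∈ R := by
  have hαα := hR.inner_self_pos hα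
  have hββ := hR.inner_self_pos hβ
  have hnα : 0 < ‖α‖ := norm_pos_iff.2 (hR.ne_zero hα)
  have hnβ : 0 < ‖β‖ := norm_pos_iff.2 (hR.ne_zero hβ)
  have hcs : ⟪β, α⟫ < ‖β‖ * ‖α‖ := by
    refine inner_lt_norm_mul_iff_real.2 fun hpar => hne ?_
    have hβα : β = (‖β‖ / ‖α‖) • α := by
      rw [div_eq_inv_mul, mul_smul, ← hpar, smul_smul, inv_mul_cancel₀ hnα.ne', one_smul]
    rcases hR.2.2.2.2 α hα _ (hβα ▸ hβ) with h | h
    · rw [hβα, h, one_smul]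
    · have : 0 < ‖β‖ / ‖α‖ := div_pos hnβ hnα
      linarith
  obtain ⟨m, hm⟩ := hR.exists_int_cartan hα hβ
  obtain ⟨n, hn⟩ := hR.exists_int_cartan hβ hα
  have hm0 : (0 : ℝ) < m := by rw [← hm]; positivity
  rw [real_inner_comm] at hn
  have hn0 : (0 : ℝ) < n := by rw [← hn]; positivity
  have hmn : (m : ℝ) * n < 4 := by
    have hsq : ⟪β, α⟫ * ⟪β, α⟫ < ⟪β, β⟫ * ⟪α, α⟫ := by
      rw [real_inner_self_eq_norm_mul_norm, real_inner_self_eq_norm_mul_norm]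
      nlinarith
    rw [← hm, ← hn, div_mul_div_comm, div_lt_iff₀ (by positivity)]
    nlinarith
  have hm1 : (1 : ℤ) ≤ m := by exact_mod_cast hm0
  have hn1 : (1 : ℤ) ≤ n := by exact_mod_cast hn0
  have hmn' : m * n < 4 := by exact_mod_cast hmn
  have : m = 1 ∨ n = 1 := by
    by_contra! h
    nlinarith [show 2 ≤ m by omega, show 2 ≤ n by omega]
  rcases this with h | h
  · have := hR.sRefl_mem hα hβ
    rwa [sRefl, hm, h, Int.cast_one, one_smul] at this
  · have := hR.neg_mem (hR.sRefl_mem hβ hα)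
    rwa [sRefl, real_inner_comm, hn, h, Int.cast_one, one_smul, neg_sub] at this

end RootSystem

section Level

variable {E : Type*} [NormedAddCommGroup E] [InnerProductSpace ℝ E] {R S SH : Set E}
  {H β γ γ' x : E}

lemma IsRootSystem.inner_ne_zero_of_mem_chamber (hR : IsRootSystem R) (hS : IsBase R S)
    (hH : ∀ α ∈ S, 0 < ⟪α, H⟫) (hβ : β ∈ R) : ⟪β, H⟫ ≠ 0 := by
  obtain ⟨c, hc, hβc, hc0 | hc0⟩ := hS.2.2 β hβ
  · exact (IsNonnegCombo.inner_pos hH ⟨c, hc, hβc, hc0⟩ (hR.ne_zero hβ)).ne'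
  · have hneg : IsNonnegCombo S (-β) := by
      refine ⟨-c, by simpa using hc, ?_, fun α => by simpa using hc0 α⟩
      simp [hβc, Finsupp.sum, Finset.sum_neg_distrib]
    have := IsNonnegCombo.inner_pos hH hneg (neg_ne_zero.2 (hR.ne_zero hβ))
    rw [inner_neg_left] at this
    linarith

lemma inner_sRefl_left (γ x H : E) :
    ⟪sRefl γ x, H⟫ = ⟪x, H⟫ - 2 * ⟪x, γ⟫ / ⟪γ, γ⟫ * ⟪γ, H⟫ := by
  rw [sRefl, inner_sub_left, real_inner_smul_left]

lemma IsRootSystem.sRefl_mem_of_mem {M : Submodule ℤ E} (hR : IsRootSystem R) (hγ : γ ∈ R)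
    (hx : x ∈ R) (hγM : γ ∈ M) (hxM : x ∈ M) : sRefl γ x ∈ M := by
  obtain ⟨n, hn⟩ := hR.exists_int_cartan hγ hx
  rw [sRefl, hn, Int.cast_smul_eq_zsmul]
  exact M.sub_mem hxM (zsmul_mem hγM n)

lemma exists_int_inner_eq_two_mul (h2 : ∀ γ ∈ SH, ⟪γ, H⟫ = 2)
    (hx : x ∈ Submodule.span ℤ SH) : ∃ k : ℤ, ⟪x, H⟫ = 2 * k := by
  induction hx using Submodule.span_induction with
  | mem γ hγ => exact ⟨1, by simp [h2 γ hγ]⟩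
  | zero => exact ⟨0, by simp⟩
  | add x y _ _ hx hy =>
    obtain ⟨a, ha⟩ := hx
    obtain ⟨b, hb⟩ := hy
    exact ⟨a + b, by rw [inner_add_left, ha, hb]; push_cast; ring⟩
  | smul n x _ hx =>
    obtain ⟨a, ha⟩ := hx
    exact ⟨n * a, by rw [← Int.cast_smul_eq_zsmul ℝ, real_inner_smul_left, ha]; push_cast; ring⟩

lemma IsRootSystem.inner_le_neg_two_or_two_le (hR : IsRootSystem R) (hS : IsBase R S)
    (hH : ∀ α ∈ S, 0 < ⟪α, H⟫) (h2 : ∀ γ ∈ SH, ⟪γ, H⟫ = 2) (hxR : x ∈ R)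
    (hx : x ∈ Submodule.span ℤ SH) : ⟪x, H⟫ ≤ -2 ∨ 2 ≤ ⟪x, H⟫ := by
  obtain ⟨k, hk⟩ := exists_int_inner_eq_two_mul h2 hx
  have hk0 : k ≠ 0 := by
    rintro rfl
    exact hR.inner_ne_zero_of_mem_chamber hS hH hxR (by simp [hk])
  rcases Int.lt_or_gt_of_ne hk0 with h | h
  · have : (k : ℝ) ≤ -1 := by exact_mod_cast Int.le_sub_one_of_lt h
    left; linarith
  · have : (1 : ℝ) ≤ k := by exact_mod_cast h
    right; linarith

lemma IsRootSystem.inner_nonpos_of_inner_eq (hR : IsRootSystem R) (hS : IsBase R S)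
    (hH : ∀ α ∈ S, 0 < ⟪α, H⟫) (hγ : γ ∈ R) (hγ' : γ' ∈ R) (hlevel : ⟪γ, H⟫ = ⟪γ', H⟫)
    (hne : γ ≠ γ') : ⟪γ, γ'⟫ ≤ 0 := by
  by_contra! h
  refine hR.inner_ne_zero_of_mem_chamber hS hH (hR.sub_mem_of_inner_pos hγ' hγ hne h) ?_
  rw [inner_sub_left, hlevel, sub_self]

lemma IsRootSystem.exists_inner_pos_of_mem_span (hR : IsRootSystem R) (hS : IsBase R S)
    (hH : ∀ α ∈ S, 0 < ⟪α, H⟫) (hSH : SH = {α ∈ R | ⟪α, H⟫ = 2})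
    (hβ : β ∈ Submodule.span ℤ SH) (hpos : 0 < ⟪β, H⟫) : ∃ γ ∈ SH, 0 < ⟪β, γ⟫ := by
  subst hSH
  have hfin : {α ∈ R | ⟪α, H⟫ = 2}.Finite := hR.1.subset fun _ h => h.1
  refine (_root_.exists_inner_pos_of_mem_span (s := hfin.toFinset) ?_ ?_ ?_ hpos).imp
    fun γ => by simp
  · simp only [Set.Finite.mem_toFinset]
    exact fun u hu v hv huv => hR.inner_nonpos_of_inner_eq hS hH hu.1 hv.1 (hu.2.trans hv.2.symm) huv
  · simp only [Set.Finite.mem_toFinset]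
    exact fun v hv => hv.2 ▸ zero_le_two
  · rw [Set.Finite.coe_toFinset]
    exact Submodule.span_le_restrictScalars ℤ ℝ _ hβ

end Level

section SubSystem

variable {E : Type*} [NormedAddCommGroup E] [InnerProductSpace ℝ E] {R S SH : Set E}
  {H β γ : E}

lemma mem_subSystem_of_mem (hγ : γ ∈ SH) : γ ∈ subSystem SH :=
  ⟨1, one_mem _, γ, hγ, rfl⟩

lemma sRefl_mem_subSystem (hγ : γ ∈ SH) (hβ : β ∈ subSystem SH) : sRefl γ β ∈ subSystem SH := by
  obtain ⟨w, hw, α, hα, rfl⟩ := hβ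
  exact ⟨sRefl γ * w, mul_mem (Submonoid.subset_closure ⟨γ, hγ, rfl⟩) hw, α, hα, rfl⟩

lemma IsRootSystem.subSystem_subset (hR : IsRootSystem R) (hSHR : SH ⊆ R) :
    subSystem SH ⊆ R ∩ Submodule.span ℤ SH := by
  rintro _ ⟨w, hw, α, hα, rfl⟩
  suffices ∀ x ∈ R ∩ Submodule.span ℤ SH, w x ∈ R ∩ Submodule.span ℤ SH from
    this α ⟨hSHR hα, Submodule.subset_span hα⟩
  induction hw using Submonoid.closure_induction with
  | mem w hw =>
    obtain ⟨γ, hγ, rfl⟩ := hw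
    exact fun x hx => ⟨hR.sRefl_mem (hSHR hγ) hx.1,
      hR.sRefl_mem_of_mem (hSHR hγ) hx.1 (Submodule.subset_span hγ) hx.2⟩
  | one => exact fun x hx => hx
  | mul w₁ w₂ _ _ ih₁ ih₂ => exact fun x hx => ih₁ _ (ih₂ x hx)

/-- Induction on the level: a positive root `β ∉ S(H)` is acute to some `γ ∈ S(H)`, and then
`β - γ` is a root of positive level `⟪β, H⟫ - 2`. -/
lemma IsRootSystem.isNonnegCombo_of_inner_pos (hR : IsRootSystem R) (hS : IsBase R S)
    (hH : ∀ α ∈ S, 0 < ⟪α, H⟫) (hSH : SH = {α ∈ R | ⟪α, H⟫ = 2}) (hβR : β ∈ R)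
    (hβ : β ∈ Submodule.span ℤ SH) (hpos : 0 < ⟪β, H⟫) : IsNonnegCombo SH β := by
  have h2 : ∀ γ ∈ SH, ⟪γ, H⟫ = 2 := fun γ hγ => (hSH ▸ hγ).2
  obtain ⟨n, hn⟩ := exists_nat_ge (⟪β, H⟫ / 2)
  induction n generalizing β with
  | zero => simp only [Nat.cast_zero] at hn; linarith
  | succ n ih =>
    by_cases hβSH : β ∈ SH
    · exact .of_mem hβSH
    obtain ⟨γ, hγ, hβγ⟩ := hR.exists_inner_pos_of_mem_span hS hH hSH hβ hpos
    have hgt : 2 < ⟪β, H⟫ := by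
      rcases hR.inner_le_neg_two_or_two_le hS hH h2 hβR hβ with h | h
      · linarith
      · exact h.lt_of_ne fun h' => hβSH (hSH ▸ ⟨hβR, h'.symm⟩)
    have hsub := hR.sub_mem_of_inner_pos (hSH ▸ hγ).1 hβR (fun h => hβSH (h ▸ hγ)) hβγ
    have hlev : ⟪β - γ, H⟫ = ⟪β, H⟫ - 2 := by rw [inner_sub_left, h2 γ hγ]
    have := ih hsub (sub_mem hβ (Submodule.subset_span hγ)) (by linarith)
      (by push_cast at hn; linarith)
    simpa using this.add (.of_mem hγ)

/-- Induction on the level. If `⟪β, γ⟫ > 0`, then `β - γ` is a root of positive level and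
`s_γ (β - γ) = s_γ β + γ`, so the induction hypothesis gives `⟪s_γ β, H⟫ > -2`; the gap between
`-2` and `2` in the levels of roots does the rest. -/
lemma IsRootSystem.inner_sRefl_pos (hR : IsRootSystem R) (hS : IsBase R S)
    (hH : ∀ α ∈ S, 0 < ⟪α, H⟫) (hSH : SH = {α ∈ R | ⟪α, H⟫ = 2}) (hγ : γ ∈ SH) (hβR : β ∈ R)
    (hβ : β ∈ Submodule.span ℤ SH) (hpos : 0 < ⟪β, H⟫) (hne : β ≠ γ) :
    0 < ⟪sRefl γ β, H⟫ := by
  have h2 : ∀ γ ∈ SH, ⟪γ, H⟫ = 2 := fun γ hγ => (hSH ▸ hγ).2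
  have hγR : γ ∈ R := (hSH ▸ hγ).1
  have hγγ := hR.inner_self_pos hγR
  obtain ⟨n, hn⟩ := exists_nat_ge (⟪β, H⟫ / 2)
  induction n generalizing β with
  | zero => simp only [Nat.cast_zero] at hn; linarith
  | succ n ih =>
    rcases le_or_gt ⟪β, γ⟫ 0 with hβγ | hβγ
    · have : 2 * ⟪β, γ⟫ / ⟪γ, γ⟫ ≤ 0 := div_nonpos_of_nonpos_of_nonneg (by linarith) hγγ.le
      rw [inner_sRefl_left, h2 γ hγ]
      linarith
    have hsub := hR.sub_mem_of_inner_pos hγR hβR hne hβγ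
    have hsubspan : β - γ ∈ Submodule.span ℤ SH := sub_mem hβ (Submodule.subset_span hγ)
    have hlev : ⟪β - γ, H⟫ = ⟪β, H⟫ - 2 := by rw [inner_sub_left, h2 γ hγ]
    have hsubpos : 0 < ⟪β - γ, H⟫ := by
      rcases hR.inner_le_neg_two_or_two_le hS hH h2 hsub hsubspan with h | h <;> linarith
    have hsubne : β - γ ≠ γ := fun h =>
      hR.two_smul_notMem hγR (by rw [two_smul, ← sub_eq_iff_eq_add.1 h]; exact hβR)
    have := ih hsub hsubspan hsubpos hsubne (by push_cast at hn; linarith)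
    rw [sRefl_sub, sRefl_self hγγ.ne', sub_neg_eq_add, inner_add_left, h2 γ hγ] at this
    rcases hR.inner_le_neg_two_or_two_le hS hH h2 (hR.sRefl_mem hγR hβR)
      (hR.sRefl_mem_of_mem hγR hβR (Submodule.subset_span hγ) hβ) with h | h <;> linarith

lemma IsRootSystem.mapsTo_sRefl (hR : IsRootSystem R) (hS : IsBase R S)
    (hH : ∀ α ∈ S, 0 < ⟪α, H⟫) (hSH : SH = {α ∈ R | ⟪α, H⟫ = 2}) (hγ : γ ∈ SH) :
    Set.MapsTo (sRefl γ) ({β ∈ subSystem SH | IsNonnegCombo SH β} \ {γ})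
      ({β ∈ subSystem SH | IsNonnegCombo SH β} \ {γ}) := by
  rintro β ⟨⟨hβ, hβnn⟩, hne⟩
  have h2 : ∀ γ ∈ SH, ⟪γ, H⟫ = 2 := fun γ hγ => (hSH ▸ hγ).2
  have hSHR : SH ⊆ R := fun γ hγ => (hSH ▸ hγ).1
  have hγγ := hR.inner_self_pos (hSHR hγ)
  obtain ⟨hβR, hβspan⟩ := hR.subSystem_subset hSHR hβ
  have hpos : 0 < ⟪β, H⟫ :=
    hβnn.inner_pos (fun α hα => (h2 α hα).symm ▸ two_pos) (hR.ne_zero hβR)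
  have hsβ := sRefl_mem_subSystem hγ hβ
  obtain ⟨hsβR, hsβspan⟩ := hR.subSystem_subset hSHR hsβ
  refine ⟨⟨hsβ, hR.isNonnegCombo_of_inner_pos hS hH hSH hsβR hsβspan
    (hR.inner_sRefl_pos hS hH hSH hγ hβR hβspan hpos hne)⟩, fun h => ?_⟩
  have : β = -γ := by rw [← sRefl_involutive hγγ.ne' β, Set.mem_singleton_iff.1 h, sRefl_self hγγ.ne']
  rw [this, inner_neg_left, h2 γ hγ] at hpos
  linarith

end SubSystem

theorem proj_eq_sum_pos_invRoots_general
    {E : Type*} [NormedAddCommGroup E] [InnerProductSpace ℝ E]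
    (R S : Set E) (hR : IsRootSystem R) (hS : IsBase R S)
    (H : E) (hH : ∀ α ∈ S, 0 < ⟪α, H⟫)
    (SH : Set E) (hSH : SH = {α ∈ R | ⟪α, H⟫ = 2})
    (Hpar Hperp : E) (hpar : Hpar ∈ Submodule.span ℝ SH)
    (hperp : ∀ v ∈ Submodule.span ℝ SH, ⟪Hperp, v⟫ = 0)
    (hdecomp : H = Hpar + Hperp)
    (P : Finset E) (hP : ↑P = {β ∈ subSystem SH | IsNonnegCombo SH β}) :
    Hpar = ∑ β ∈ P, invRoot β ∧
    Hpar ∈ Submodule.span ℤ (invRoot '' R) := by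
  classical
  have hSHR : SH ⊆ R := fun γ hγ => (hSH ▸ hγ).1
  have h2 : ∀ γ ∈ SH, ⟪γ, H⟫ = 2 := fun γ hγ => (hSH ▸ hγ).2
  have hPR : ∀ β ∈ P, β ∈ R ∩ Submodule.span ℤ SH := fun β hβ => by
    rw [← Finset.mem_coe, hP] at hβ
    exact hR.subSystem_subset hSHR hβ.1
  have hsum : ∀ γ ∈ SH, ⟪∑ β ∈ P, invRoot β, γ⟫ = 2 := fun γ hγ => by
    refine inner_sum_invRoot_eq_two ?_ (hR.inner_self_pos (hSHR hγ)).ne' ?_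
    · rw [← Finset.mem_coe, hP]
      exact ⟨mem_subSystem_of_mem hγ, .of_mem hγ⟩
    · rw [Finset.coe_erase, hP]
      exact hR.mapsTo_sRefl hS hH hSH hγ
  have hHpar : ∀ γ ∈ SH, ⟪Hpar, γ⟫ = 2 := fun γ hγ => by
    rw [← h2 γ hγ, hdecomp, inner_add_right, ← real_inner_comm γ Hperp,
      hperp γ (Submodule.subset_span hγ), add_zero, real_inner_comm]
  have hsumspan : ∑ β ∈ P, invRoot β ∈ Submodule.span ℝ SH := Submodule.sum_mem _ fun β hβ =>
    Submodule.smul_mem _ _ (Submodule.span_le_restrictScalars ℤ ℝ SH (hPR β hβ).2)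
  have heq : Hpar = ∑ β ∈ P, invRoot β := eq_of_mem_span_of_forall_inner_eq hpar hsumspan
    fun γ hγ => (hHpar γ hγ).trans (hsum γ hγ).symm
  exact ⟨heq, heq ▸ Submodule.sum_mem _ fun β hβ => Submodule.subset_span ⟨β, (hPR β hβ).1, rfl⟩⟩

/-- For `H` in the open fundamental Weyl chamber with `S(H)` nonempty, the
orthogonal projection `H_∥` of `H` onto the span of `S(H)` equals the sum of the
positive inverse roots of the subsystem `R(H)` with base `S(H)`; in particular
`H_∥` lies in the `ℤ`-span of the inverse roots of `R`. -/
theorem proj_eq_sum_pos_invRoots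
    {E : Type*} [NormedAddCommGroup E] [InnerProductSpace ℝ E] [FiniteDimensional ℝ E]
    (R S : Set E) (hR : IsRootSystem R) (hS : IsBase R S)
    (H : E) (hH : ∀ α ∈ S, 0 < ⟪α, H⟫)
    (SH : Set E) (hSH : SH = {α ∈ R | ⟪α, H⟫ = 2}) (hne : SH.Nonempty)
    (Hpar Hperp : E) (hpar : Hpar ∈ Submodule.span ℝ SH)
    (hperp : ∀ v ∈ Submodule.span ℝ SH, ⟪Hperp, v⟫ = 0)
    (hdecomp : H = Hpar + Hperp)
    (P : Finset E) (hP : ↑P = {β ∈ subSystem SH | IsNonnegCombo SH β}) :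
    Hpar = ∑ β ∈ P, invRoot β ∧
    Hpar ∈ Submodule.span ℤ (invRoot '' R) :=
  proj_eq_sum_pos_invRoots_general R S hR hS H hH SH hSH Hpar Hperp hpar hperp hdecomp P hP
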